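/- arXiv:2510.25878 — 2 statements merged into one kernel-verified Lean document; each statement's English description precedes it below -/
import Mathlib

section
/- If the lender liquidates at price p_i = p_0/(1 + ε·p_0), the lender's total payout (y/2 + ε)·p_i equals exactly 1 (million fiat, the principal); for any p_i > p_0/(1 + ε·p_0) the payout exceeds 1. -/
/-- Lender liquidation threshold: at price `p_i = p_0 / (1 + ε * p_0)` the lender's
total payout `(y/2 + ε) * p_i` equals exactly `1`; for any higher price the payout
exceeds `1`. -/
theorem lender_liquidation_threshold (y p0 ε : ℝ) (hp0 : 0 < p0)
    (hcoll : y * p0 = 2) (hε : 0 < ε) :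
    (y / 2 + ε) * (p0 / (1 + ε * p0)) = 1 ∧
      ∀ pi : ℝ, pi > p0 / (1 + ε * p0) → (y / 2 + ε) * pi > 1 := by
  have hy : y = 2 / p0 := by field_simp at hcoll ⊢; linarith
  have hden : 0 < 1 + ε * p0 := by positivity
  have key : (y / 2 + ε) * (p0 / (1 + ε * p0)) = 1 := by
    subst hy; field_simp
  refine ⟨key, fun pi hpi => ?_⟩
  have hpos : 0 < y / 2 + ε := by
    subst hy; positivity
  calc 1 = (y / 2 + ε) * (p0 / (1 + ε * p0)) := key.symm
    _ < (y / 2 + ε) * pi := by exact mul_lt_mul_of_pos_left hpi hpos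
end

section
/- The strategy profile σ = (lend, correct contract, x = 1, open) is a subgame perfect equilibrium of the 5-stage extensive-form game Γ_1 induced by the basic protocol Π_1, for any 0 < ε < 1. -/
open Classical

/-! Formalization of the 5-stage extensive-form game Γ₁ induced by the basic
protocol Π₁.  Stage 1: lender chooses to lend or not (¬lend ends with (0,0)).
Stage 2: borrower creates a correct contract or not (incorrect ends with (0,0)).
Stage 3: borrower chooses a repayment `x ∈ [0,1]`.  Stage 4: lender chooses to
open the contract or not.  Stage 5 (reached only after the lender does not
open): borrower chooses to open or not.  Payoffs (lender, borrower) in millions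
of fiat are as in Figure 2 of the paper. -/

/-- Lender's payoff at a stage-5 terminal node (the lender did not open),
given repayment `x` and the borrower's stage-5 decision. -/
noncomputable def lenderPayoff5 (ε x : ℝ) (bOpen : Bool) : ℝ :=
  if x = 1 then (if bOpen then -ε else 1) else (if bOpen then 0 else 1)

/-- Borrower's payoff at a stage-5 terminal node. -/
noncomputable def borrowerPayoff5 (ε x : ℝ) (bOpen : Bool) : ℝ :=
  if x = 1 then (if bOpen then 0 else -2) else (if bOpen then -x - ε else -1 - x)

/-- Lender's payoff from a stage-4 node, given repayment `x`, the lender's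
decision `lOpen`, and the borrower's stage-5 continuation decision `b5`. -/
noncomputable def lenderPayoff4 (ε x : ℝ) (lOpen b5 : Bool) : ℝ :=
  if lOpen then (if x = 1 then 0 else -(1 - x)) else lenderPayoff5 ε x b5

/-- Borrower's payoff from a stage-4 node. -/
noncomputable def borrowerPayoff4 (ε x : ℝ) (lOpen b5 : Bool) : ℝ :=
  if lOpen then (if x = 1 then 0 else 1 - x) else borrowerPayoff5 ε x b5

/-- Honest lender stage-4 strategy: open the contract iff the borrower fully repaid. -/
noncomputable def honestLenderOpen (x : ℝ) : Bool := if x = 1 then true else false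

/-- The strategy profile σ = (lend, correct contract, x = 1, open) is a subgame
perfect equilibrium of Γ₁ for any `0 < ε < 1`: at every decision node of every
subgame, the prescribed action maximizes the mover's payoff given the honest
continuation play (borrower always opens at stage 5, lender opens iff `x = 1`
at stage 4, borrower repays `x = 1` at stage 3, borrower creates a correct
contract at stage 2, lender lends at stage 1). -/
theorem basic_protocol_SPE (ε : ℝ) (hε0 : 0 < ε) (hε1 : ε < 1) :
    -- Stage 5: for every repayment `x`, opening is optimal for the borrower.
    (∀ x ∈ Set.Icc (0 : ℝ) 1, ∀ b : Bool,
      borrowerPayoff5 ε x true ≥ borrowerPayoff5 ε x b) ∧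
    -- Stage 4: for every repayment `x`, the honest lender decision (open iff
    -- `x = 1`) is optimal against the borrower's honest stage-5 continuation.
    (∀ x ∈ Set.Icc (0 : ℝ) 1, ∀ l : Bool,
      lenderPayoff4 ε x (honestLenderOpen x) true ≥ lenderPayoff4 ε x l true) ∧
    -- Stage 3: full repayment `x = 1` is optimal for the borrower given honest
    -- continuation play.
    (∀ x ∈ Set.Icc (0 : ℝ) 1,
      borrowerPayoff4 ε 1 (honestLenderOpen 1) true ≥
        borrowerPayoff4 ε x (honestLenderOpen x) true) ∧
    -- Stage 2: creating a correct contract is optimal for the borrower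
    -- (an incorrect contract ends the game with borrower payoff 0).
    (∀ c : Bool,
      borrowerPayoff4 ε 1 (honestLenderOpen 1) true ≥
        (if c then borrowerPayoff4 ε 1 (honestLenderOpen 1) true else 0)) ∧
    -- Stage 1: lending is optimal for the lender (not lending yields payoff 0).
    (∀ l : Bool,
      lenderPayoff4 ε 1 (honestLenderOpen 1) true ≥
        (if l then lenderPayoff4 ε 1 (honestLenderOpen 1) true else 0)) := by
  refine ⟨?_, ?_, ?_, ?_, ?_⟩
  · rintro x ⟨hx0, hx1⟩ b
    unfold borrowerPayoff5
    by_cases h : x = 1 <;> cases b <;> simp [h] <;> nlinarith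
  · rintro x ⟨hx0, hx1⟩ l
    unfold lenderPayoff4 honestLenderOpen lenderPayoff5
    by_cases h : x = 1 <;> cases l <;> simp [h] <;> nlinarith
  · rintro x ⟨hx0, hx1⟩
    unfold borrowerPayoff4 honestLenderOpen borrowerPayoff5
    by_cases h : x = 1 <;> simp [h] <;> nlinarith
  · intro c
    cases c <;> simp [borrowerPayoff4, honestLenderOpen]
  · intro l
    cases l <;> simp [lenderPayoff4, honestLenderOpen]
end
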